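/- arXiv:2506.13337 — 2 statements merged into one kernel-verified Lean document; each statement's English description precedes it below -/
import Mathlib

section
/- For the anti-Fibonacci sequence (a = (1,1)), the subsequence A_{2n+1} is the arithmetic progression A_{2n+1} = 3 + 10n for all n ≥ 0, and every positive integer congruent to 3 modulo 10 is an anti-Fibonacci number. -/
/-- `A` and `B` (indexed from 1) are complementary strictly increasing sequences
of positive integers: every positive integer lies in exactly one of their ranges. -/
def CompPair (A B : ℕ → ℕ) : Prop :=
  StrictMonoOn A (Set.Ici 1) ∧ StrictMonoOn B (Set.Ici 1) ∧
  (∀ n, 1 ≤ n → 1 ≤ A n) ∧ (∀ n, 1 ≤ n → 1 ≤ B n) ∧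
  ∀ m, 1 ≤ m →
    ((∃ n, 1 ≤ n ∧ A n = m) ∧ ¬(∃ n, 1 ≤ n ∧ B n = m)) ∨
    (¬(∃ n, 1 ≤ n ∧ A n = m) ∧ (∃ n, 1 ≤ n ∧ B n = m))

/-- `(A, B)` is the anti-recurrence pair for the positive linear form `a` of dimension `k`:
`A n = Σ_{j=1}^k a_j * B_{(n-1)k+j}` for all `n ≥ 1`. -/
def AntiRec (k : ℕ) (a : Fin k → ℕ) (A B : ℕ → ℕ) : Prop :=
  CompPair A B ∧
  ∀ n, 1 ≤ n → A n = ∑ j : Fin k, a j * B ((n - 1) * k + (j : ℕ) + 1)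

/-!
The positive integers split into blocks `{5n+1, …, 5n+5}`. Each block contains exactly one
anti-Fibonacci number, `A (n+1) ∈ {5n+3, 5n+4}`, and its other four elements are
`B (4n+1), …, B (4n+4)`. Hence `A (2n+1) = B (4n+1) + B (4n+2) = 10n + 3` and
`A (2n+2) = B (4n+3) + B (4n+4) = 15n + 12 - A (n+1) ∈ {10n+8, 10n+9}`, which reproduces the
picture in the later blocks. The crude bound `A k ≥ 4k - 1` keeps every other `A`-value out of
the block under construction.
-/

open Set

namespace CompPair

variable {A B : ℕ → ℕ}

theorem le_B (h : CompPair A B) {i : ℕ} (hi : 1 ≤ i) : i ≤ B i := by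
  induction i, hi using Nat.le_induction with
  | base => exact h.2.2.2.1 1 le_rfl
  | succ i hi ih =>
    have : B i < B (i + 1) := h.2.1 (mem_Ici.2 hi) (mem_Ici.2 (by omega)) (by omega)
    omega

theorem B_notMem_image (h : CompPair A B) {i : ℕ} (hi : 1 ≤ i) : B i ∉ A '' Ici 1 := by
  rcases h.2.2.2.2 (B i) (h.2.2.2.1 i hi) with ⟨-, hB⟩ | ⟨hA, -⟩
  · exact absurd ⟨i, hi, rfl⟩ hB
  · exact hA

theorem exists_B_eq (h : CompPair A B) {m : ℕ} (hm : 1 ≤ m) (hA : m ∉ A '' Ici 1) :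
    ∃ i, 1 ≤ i ∧ B i = m := by
  rcases h.2.2.2.2 m hm with ⟨hA', -⟩ | ⟨-, hB⟩
  · exact absurd hA' hA
  · exact hB

theorem B_one_eq_one (h : CompPair A B) (hA : 1 ∉ A '' Ici 1) : B 1 = 1 := by
  obtain ⟨i, hi, hBi⟩ := h.exists_B_eq le_rfl hA
  have := h.le_B hi
  obtain rfl : i = 1 := by omega
  exact hBi

theorem B_succ_eq (h : CompPair A B) {j v : ℕ} (hj : 1 ≤ j) (hlt : B j < v)
    (hv : v ∉ A '' Ici 1) (hgap : ∀ w, B j < w → w < v → w ∈ A '' Ici 1) : B (j + 1) = v := by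
  obtain ⟨i, hi, rfl⟩ := h.exists_B_eq (by omega) hv
  have hji : j < i := (h.2.1.lt_iff_lt (mem_Ici.2 hj) (mem_Ici.2 hi)).1 hlt
  obtain hi' | hi' : j + 1 = i ∨ j + 1 < i := by omega
  · rw [hi']
  · have h₁ : B j < B (j + 1) := h.2.1 (mem_Ici.2 hj) (mem_Ici.2 (by omega)) (by omega)
    have h₂ : B (j + 1) < B i := h.2.1 (mem_Ici.2 (by omega)) (mem_Ici.2 hi) hi'
    exact absurd (hgap _ h₁ h₂) (h.B_notMem_image (by omega))

theorem B_succ_eq_add_one (h : CompPair A B) {j : ℕ} (hj : 1 ≤ j)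
    (hv : B j + 1 ∉ A '' Ici 1) : B (j + 1) = B j + 1 :=
  h.B_succ_eq hj (by omega) hv fun _ _ _ ↦ by omega

theorem B_succ_eq_add_two (h : CompPair A B) {j : ℕ} (hj : 1 ≤ j)
    (hw : B j + 1 ∈ A '' Ici 1) (hv : B j + 2 ∉ A '' Ici 1) : B (j + 1) = B j + 2 :=
  h.B_succ_eq hj (by omega) hv fun w _ _ ↦ by rwa [show w = B j + 1 by omega]

end CompPair

section AntiFibonacci

variable {A B : ℕ → ℕ}

theorem antiFib_apply_succ (h : AntiRec 2 ![1, 1] A B) (n : ℕ) :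
    A (n + 1) = B (2 * n + 1) + B (2 * n + 2) := by
  rw [h.2 (n + 1) (by omega), Fin.sum_univ_two]
  simp only [Matrix.cons_val_zero, Matrix.cons_val_one, one_mul, Fin.val_zero, Fin.val_one]
  congr 2 <;> omega

theorem four_mul_le_antiFib_add_one (h : AntiRec 2 ![1, 1] A B) {k : ℕ} (hk : 1 ≤ k) :
    4 * k ≤ A k + 1 := by
  obtain ⟨n, rfl⟩ : ∃ n, k = n + 1 := ⟨k - 1, by omega⟩
  have h₁ := h.1.le_B (i := 2 * n + 1) (by omega)
  have h₂ := h.1.le_B (i := 2 * n + 2) (by omega)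
  rw [antiFib_apply_succ h]
  omega

def NearFiveMul (A : ℕ → ℕ) (k : ℕ) : Prop :=
  A k + 2 = 5 * k ∨ (k % 2 = 0 ∧ A k + 1 = 5 * k)

theorem antiFib_notMem_block (h : AntiRec 2 ![1, 1] A B) {K n v : ℕ}
    (hgood : ∀ k, 1 ≤ k → k ≤ K → NearFiveMul A k) (hvK : v + 1 < 4 * (K + 1))
    (hlo : 5 * n + 3 ≤ v) (hhi : v ≤ 5 * n + 7) (hne : A (n + 1) ≠ v) : v ∉ A '' Ici 1 := by
  rintro ⟨k, hk, rfl⟩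
  have h₁ := four_mul_le_antiFib_add_one h hk
  have h₂ := hgood k hk (by omega)
  unfold NearFiveMul at h₂
  obtain rfl : k = n + 1 := by omega
  exact hne rfl

theorem antiFib_B_four_mul_add_three (h : AntiRec 2 ![1, 1] A B) {n : ℕ}
    (hgood : ∀ k, 1 ≤ k → k ≤ 2 * n + 1 → NearFiveMul A k) (hB : B (4 * n + 2) = 5 * n + 2) :
    B (4 * n + 3) + A (n + 1) = 10 * n + 7 ∧ B (4 * n + 4) = 5 * n + 5 := by
  have hc := h.1
  have hmem : A (n + 1) ∈ A '' Ici 1 := ⟨n + 1, by simp⟩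
  have ha := hgood (n + 1) (by omega) (by omega)
  unfold NearFiveMul at ha
  have hnot {v} (hlo : 5 * n + 3 ≤ v) (hhi : v ≤ 5 * n + 5) (hne : A (n + 1) ≠ v) :=
    antiFib_notMem_block h hgood (by omega) hlo (by omega) hne
  obtain ha' | ha' : A (n + 1) = 5 * n + 3 ∨ A (n + 1) = 5 * n + 4 := by omega
  · have h₃ : B (4 * n + 3) = 5 * n + 4 := by
      rw [hc.B_succ_eq_add_two (j := 4 * n + 2) (by omega) (by rw [hB, ← ha']; exact hmem)
        (by rw [hB]; exact hnot (by omega) (by omega) (by omega)), hB]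
    have h₄ : B (4 * n + 4) = 5 * n + 5 := by
      rw [hc.B_succ_eq_add_one (j := 4 * n + 3) (by omega)
        (by rw [h₃]; exact hnot (by omega) (by omega) (by omega)), h₃]
    omega
  · have h₃ : B (4 * n + 3) = 5 * n + 3 := by
      rw [hc.B_succ_eq_add_one (j := 4 * n + 2) (by omega)
        (by rw [hB]; exact hnot (by omega) (by omega) (by omega)), hB]
    have h₄ : B (4 * n + 4) = 5 * n + 5 := by
      rw [hc.B_succ_eq_add_two (j := 4 * n + 3) (by omega) (by rw [h₃, ← ha']; exact hmem)
        (by rw [h₃]; exact hnot (by omega) (by omega) (by omega)), h₃]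
    omega

theorem antiFib_step (h : AntiRec 2 ![1, 1] A B) {n : ℕ}
    (hgood : ∀ k, 1 ≤ k → k ≤ 2 * n + 1 → NearFiveMul A k) (hB : B (4 * n + 2) = 5 * n + 2) :
    NearFiveMul A (2 * n + 2) ∧ NearFiveMul A (2 * n + 3) ∧ B (4 * n + 6) = 5 * n + 7 := by
  have hc := h.1
  obtain ⟨hB₃, hB₄⟩ := antiFib_B_four_mul_add_three h hgood hB
  have ha := hgood (n + 1) (by omega) (by omega)
  unfold NearFiveMul at ha
  have hA₂ : A (2 * n + 2) = B (4 * n + 3) + B (4 * n + 4) := by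
    rw [antiFib_apply_succ h]; ring_nf
  have hgood' : ∀ k, 1 ≤ k → k ≤ 2 * n + 2 → NearFiveMul A k := fun k hk hkn ↦ by
    obtain hkn | rfl := hkn.lt_or_eq
    · exact hgood k hk (by omega)
    · unfold NearFiveMul; omega
  have hnot {v} (hlo : 5 * n + 6 ≤ v) (hhi : v ≤ 5 * n + 7) :=
    antiFib_notMem_block h hgood' (by omega) (by omega) hhi (by omega)
  have hB₅ : B (4 * n + 5) = 5 * n + 6 := by
    rw [hc.B_succ_eq_add_one (j := 4 * n + 4) (by omega)
      (by rw [hB₄]; exact hnot le_rfl (by omega)), hB₄]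
  have hB₆ : B (4 * n + 6) = 5 * n + 7 := by
    rw [hc.B_succ_eq_add_one (j := 4 * n + 5) (by omega)
      (by rw [hB₅]; exact hnot (by omega) le_rfl), hB₅]
  have hA₃ : A (2 * n + 3) = B (4 * n + 5) + B (4 * n + 6) := by
    rw [antiFib_apply_succ h]; ring_nf
  refine ⟨hgood' _ (by omega) le_rfl, ?_, hB₆⟩
  unfold NearFiveMul
  omega

theorem antiFib_base (h : AntiRec 2 ![1, 1] A B) : NearFiveMul A 1 ∧ B 2 = 2 := by
  have hsmall {v} (hv : v ≤ 2) : v ∉ A '' Ici 1 := by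
    rintro ⟨k, hk : 1 ≤ k, rfl⟩
    have := four_mul_le_antiFib_add_one h hk
    omega
  have hB₁ := h.1.B_one_eq_one (hsmall (by omega))
  have hB₂ : B 2 = 2 := by
    rw [h.1.B_succ_eq_add_one (j := 1) le_rfl (by rw [hB₁]; exact hsmall le_rfl), hB₁]
  have hA₁ := antiFib_apply_succ h 0
  refine ⟨?_, hB₂⟩
  unfold NearFiveMul
  simp only [mul_zero, zero_add] at hA₁
  omega

theorem antiFib_invariant (h : AntiRec 2 ![1, 1] A B) (n : ℕ) :
    (∀ k, 1 ≤ k → k ≤ 2 * n + 1 → NearFiveMul A k) ∧ B (4 * n + 2) = 5 * n + 2 := by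
  induction n with
  | zero =>
    obtain ⟨hA₁, hB₂⟩ := antiFib_base h
    exact ⟨fun k hk hk' ↦ by rwa [show k = 1 by omega], hB₂⟩
  | succ n ih =>
    obtain ⟨h₂, h₃, hB⟩ := antiFib_step h ih.1 ih.2
    refine ⟨fun k hk hkn ↦ ?_, by rw [show 4 * (n + 1) + 2 = 4 * n + 6 by ring, hB]; ring⟩
    obtain hkn | rfl | rfl : k ≤ 2 * n + 1 ∨ k = 2 * n + 2 ∨ k = 2 * n + 3 := by omega
    exacts [ih.1 k hk hkn, h₂, h₃]

theorem antiFib_odd (h : AntiRec 2 ![1, 1] A B) (n : ℕ) : A (2 * n + 1) = 10 * n + 3 := by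
  have := (antiFib_invariant h n).1 (2 * n + 1) (by omega) le_rfl
  unfold NearFiveMul at this
  omega

end AntiFibonacci

/-- The anti-Fibonacci subsequence A_{2n+1} equals 3 + 10n, and every positive
integer congruent to 3 mod 10 is an anti-Fibonacci number. -/
theorem stmt17 (A B : ℕ → ℕ) (h : AntiRec 2 ![1, 1] A B) :
    (∀ n : ℕ, A (2 * n + 1) = 3 + 10 * n) ∧
    (∀ m : ℕ, m % 10 = 3 → ∃ n, 1 ≤ n ∧ A n = m) := by
  refine ⟨fun n ↦ by rw [antiFib_odd h]; ring, fun m hm ↦ ⟨2 * (m / 10) + 1, by omega, ?_⟩⟩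
  rw [antiFib_odd h]
  omega
end

section
/- For the anti-Fibonacci numbers A (with A_1 = 3, A_n = B_{2n-1} + B_{2n}), every difference A_{n+1} - A_n for n ≥ 1 equals either 4, 5, or 6, and the difference word (A_{n+1} - A_n)_{n≥1} is a concatenation of the two-letter blocks 64 and 55. -/
private lemma af_nextB {B : ℕ → ℕ} (hB : StrictMonoOn B (Set.Ici 1))
    {i v w : ℕ} (hi : 1 ≤ i) (hv : B i = v)
    (hw : ∃ i', 1 ≤ i' ∧ B i' = w) (hvw : v < w)
    (hbet : ∀ u, v < u → u < w → ¬ ∃ i', 1 ≤ i' ∧ B i' = u) :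
    B (i + 1) = w := by
  obtain ⟨i', hi', hBi'⟩ := hw
  have hgt : i < i' := by
    by_contra hc
    push_neg at hc
    rcases eq_or_lt_of_le hc with hc | hc
    · subst hc; omega
    · have := hB (Set.mem_Ici.mpr hi') (Set.mem_Ici.mpr hi) hc
      omega
  rcases (by omega : i + 1 = i' ∨ i + 1 < i') with hc | hc
  · rw [hc]; exact hBi'
  · exfalso
    have h1 : B i < B (i + 1) :=
      hB (Set.mem_Ici.mpr hi) (Set.mem_Ici.mpr (by omega)) (by omega)
    have h2 : B (i + 1) < B i' :=
      hB (Set.mem_Ici.mpr (by omega)) (Set.mem_Ici.mpr hi') hc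
    exact hbet (B (i + 1)) (by omega) (by omega) ⟨i + 1, by omega, rfl⟩

private lemma af_Bge {B : ℕ → ℕ} (hB : StrictMonoOn B (Set.Ici 1))
    (hB1 : ∀ n, 1 ≤ n → 1 ≤ B n) : ∀ i, 1 ≤ i → i ≤ B i := by
  intro i
  induction i with
  | zero => omega
  | succ n ihn =>
    intro _
    by_cases hn : 1 ≤ n
    · have h1 := ihn hn
      have h2 : B n < B (n + 1) :=
        hB (Set.mem_Ici.mpr hn) (Set.mem_Ici.mpr (by omega)) (by omega)
      omega
    · have : n = 0 := by omega
      subst this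
      exact hB1 1 le_rfl

/-- The block lemma: given the main invariant up to `J`, the values of `B` are forced. -/
private lemma af_BF {A B : ℕ → ℕ}
    (hA : StrictMonoOn A (Set.Ici 1)) (hB : StrictMonoOn B (Set.Ici 1))
    (hB1 : ∀ n, 1 ≤ n → 1 ≤ B n)
    (hcomp : ∀ m, 1 ≤ m →
      ((∃ n, 1 ≤ n ∧ A n = m) ∧ ¬(∃ n, 1 ≤ n ∧ B n = m)) ∨
      (¬(∃ n, 1 ≤ n ∧ A n = m) ∧ (∃ n, 1 ≤ n ∧ B n = m)))
    (hAval : ∀ m, A (m + 1) = B (2 * m + 1) + B (2 * m + 2))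
    {J : ℕ}
    (hQ : ∀ j, 1 ≤ j → j ≤ J → 5 * j = A j + 2 ∨ (5 * j = A j + 1 ∧ j % 2 = 0)) :
    ∀ k, k + 1 ≤ J →
      B (4 * k + 1) = 5 * k + 1 ∧ B (4 * k + 2) = 5 * k + 2 ∧
      B (4 * k + 3) + A (k + 1) = 10 * k + 7 ∧ B (4 * k + 4) = 5 * k + 5 := by
  have hBge := af_Bge hB hB1
  -- A grows by at least 4
  have hAgap : ∀ j, 1 ≤ j → A j + 4 ≤ A (j + 1) := by
    intro j hj
    obtain ⟨m, rfl⟩ : ∃ m, j = m + 1 := ⟨j - 1, by omega⟩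
    have h1 := hAval m
    have h2 := hAval (m + 1)
    have e1 : 2 * (m + 1) + 1 = 2 * m + 3 := by ring
    have e2 : 2 * (m + 1) + 2 = 2 * m + 4 := by ring
    rw [e1, e2] at h2
    have g1 : B (2 * m + 1) < B (2 * m + 2) :=
      hB (Set.mem_Ici.mpr (by omega)) (Set.mem_Ici.mpr (by omega)) (by omega)
    have g2 : B (2 * m + 2) < B (2 * m + 3) :=
      hB (Set.mem_Ici.mpr (by omega)) (Set.mem_Ici.mpr (by omega)) (by omega)
    have g3 : B (2 * m + 3) < B (2 * m + 4) :=
      hB (Set.mem_Ici.mpr (by omega)) (Set.mem_Ici.mpr (by omega)) (by omega)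
    omega
  -- nothing ≤ 5J+1 other than the listed values of A is an A-value
  have notA : ∀ m, 1 ≤ J → 1 ≤ m → m ≤ 5 * J + 1 →
      (∀ j, 1 ≤ j → j ≤ J → A j ≠ m) → ¬ ∃ n, 1 ≤ n ∧ A n = m := by
    rintro m hJ hm1 hm2 hnot ⟨i, hi1, hAi⟩
    by_cases hiJ : i ≤ J
    · exact hnot i hi1 hiJ hAi
    · push_neg at hiJ
      have hAJ : 5 * J ≤ A J + 2 := by
        rcases hQ J hJ le_rfl with h | h <;> omega
      have h4 : A J + 4 ≤ A (J + 1) := hAgap J hJ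
      have h5 : A (J + 1) ≤ A i := by
        rcases (by omega : J + 1 = i ∨ J + 1 < i) with hc | hc
        · rw [hc]
        · exact le_of_lt (hA (Set.mem_Ici.mpr (by omega)) (Set.mem_Ici.mpr (by omega)) hc)
      omega
  have getB : ∀ m, 1 ≤ m → (¬ ∃ n, 1 ≤ n ∧ A n = m) → ∃ n, 1 ≤ n ∧ B n = m := by
    intro m hm h
    rcases hcomp m hm with ⟨h1, _⟩ | ⟨_, h2⟩
    · exact absurd h1 h
    · exact h2
  have notB : ∀ m, 1 ≤ m → (∃ n, 1 ≤ n ∧ A n = m) → ¬ ∃ n, 1 ≤ n ∧ B n = m := by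
    intro m hm h
    rcases hcomp m hm with ⟨_, h1⟩ | ⟨h2, _⟩
    · exact h1
    · exact absurd h h2
  intro k
  induction k with
  | zero =>
    intro hJ
    simp only [Nat.zero_add] at hJ
    have hA1 : A 1 = 3 := by
      rcases hQ 1 (by omega) hJ with h | h <;> omega
    have hn1 : ¬ ∃ n, 1 ≤ n ∧ A n = 1 := by
      apply notA 1 hJ (by omega) (by omega)
      intro j h1 h2
      rcases hQ j h1 h2 with h | h <;> omega
    have hn2 : ¬ ∃ n, 1 ≤ n ∧ A n = 2 := by
      apply notA 2 hJ (by omega) (by omega)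
      intro j h1 h2
      rcases hQ j h1 h2 with h | h <;> omega
    have hn4 : ¬ ∃ n, 1 ≤ n ∧ A n = 4 := by
      apply notA 4 hJ (by omega) (by omega)
      intro j h1 h2
      rcases hQ j h1 h2 with h | h <;> omega
    have hn5 : ¬ ∃ n, 1 ≤ n ∧ A n = 5 := by
      apply notA 5 hJ (by omega) (by omega)
      intro j h1 h2
      rcases hQ j h1 h2 with h | h <;> omega
    have hB1v : B 1 = 1 := by
      obtain ⟨i, hi, hBi⟩ := getB 1 (by omega) hn1
      have := hBge i hi
      have : i = 1 := by omega
      subst this; exact hBi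
    have hB2v : B 2 = 2 := by
      apply af_nextB hB (by omega) hB1v (getB 2 (by omega) hn2) (by omega)
      intro u h1 h2; omega
    have hB3v : B 3 = 4 := by
      apply af_nextB hB (i := 2) (by omega) hB2v (getB 4 (by omega) hn4) (by omega)
      intro u h1 h2
      have : u = 3 := by omega
      subst this
      exact notB 3 (by omega) ⟨1, by omega, hA1⟩
    have hB4v : B 4 = 5 := by
      apply af_nextB hB (i := 3) (by omega) hB3v (getB 5 (by omega) hn5) (by omega)
      intro u h1 h2; omega
    refine ⟨by simpa using hB1v, by simpa using hB2v, ?_, by simpa using hB4v⟩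
    rw [show 4 * 0 + 3 = 3 from rfl, show 0 + 1 = 1 from rfl, hB3v, hA1]
  | succ k IH =>
    intro hJ
    obtain ⟨hb1, hb2, hb3, hb4⟩ := IH (by omega)
    have hJ1 : 1 ≤ J := by omega
    -- A (k+2)
    have hQk2 := hQ (k + 2) (by omega) (by omega)
    have hn6 : ¬ ∃ n, 1 ≤ n ∧ A n = 5 * k + 6 := by
      apply notA _ hJ1 (by omega) (by omega)
      intro j h1 h2
      rcases hQ j h1 h2 with h | h <;> omega
    have hn7 : ¬ ∃ n, 1 ≤ n ∧ A n = 5 * k + 7 := by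
      apply notA _ hJ1 (by omega) (by omega)
      intro j h1 h2
      rcases hQ j h1 h2 with h | h <;> omega
    have hn10 : ¬ ∃ n, 1 ≤ n ∧ A n = 5 * k + 10 := by
      apply notA _ hJ1 (by omega) (by omega)
      intro j h1 h2
      rcases hQ j h1 h2 with h | h <;> omega
    have hb5 : B (4 * k + 5) = 5 * k + 6 := by
      have := af_nextB hB (i := 4 * k + 4) (by omega) hb4
        (getB _ (by omega) hn6) (by omega) (by intro u h1 h2; omega)
      simpa using this
    have hb6 : B (4 * k + 6) = 5 * k + 7 := by
      have := af_nextB hB (i := 4 * k + 5) (by omega) hb5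
        (getB _ (by omega) hn7) (by omega) (by intro u h1 h2; omega)
      simpa using this
    rcases hQk2 with hc | hc
    · -- A (k+2) = 5k+8
      have hAk2 : A (k + 2) = 5 * k + 8 := by omega
      have hn9 : ¬ ∃ n, 1 ≤ n ∧ A n = 5 * k + 9 := by
        apply notA _ hJ1 (by omega) (by omega)
        intro j h1 h2 hAj
        rcases hQ j h1 h2 with h | h
        · omega
        · have : j = k + 2 := by omega
          subst this; omega
      have hb7 : B (4 * k + 7) = 5 * k + 9 := by
        have := af_nextB hB (i := 4 * k + 6) (by omega) hb6
          (getB _ (by omega) hn9) (by omega) ?_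
        · simpa using this
        · intro u h1 h2
          have : u = 5 * k + 8 := by omega
          subst this
          exact notB _ (by omega) ⟨k + 2, by omega, hAk2⟩
      have hb8 : B (4 * k + 8) = 5 * k + 10 := by
        have := af_nextB hB (i := 4 * k + 7) (by omega) hb7
          (getB _ (by omega) hn10) (by omega) (by intro u h1 h2; omega)
        simpa using this
      refine ⟨?_, ?_, ?_, ?_⟩
      · have e : 4 * (k + 1) + 1 = 4 * k + 5 := by ring
        rw [e, hb5]; ring
      · have e : 4 * (k + 1) + 2 = 4 * k + 6 := by ring
        rw [e, hb6]; ring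
      · have e : 4 * (k + 1) + 3 = 4 * k + 7 := by ring
        have e2 : (k + 1) + 1 = k + 2 := by ring
        rw [e, e2, hb7, hAk2]; ring
      · have e : 4 * (k + 1) + 4 = 4 * k + 8 := by ring
        rw [e, hb8]; ring
    · -- A (k+2) = 5k+9
      have hAk2 : A (k + 2) = 5 * k + 9 := by omega
      have hn8 : ¬ ∃ n, 1 ≤ n ∧ A n = 5 * k + 8 := by
        apply notA _ hJ1 (by omega) (by omega)
        intro j h1 h2 hAj
        rcases hQ j h1 h2 with h | h
        · have : j = k + 2 := by omega
          subst this; omega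
        · omega
      have hb7 : B (4 * k + 7) = 5 * k + 8 := by
        have := af_nextB hB (i := 4 * k + 6) (by omega) hb6
          (getB _ (by omega) hn8) (by omega) (by intro u h1 h2; omega)
        simpa using this
      have hb8 : B (4 * k + 8) = 5 * k + 10 := by
        have := af_nextB hB (i := 4 * k + 7) (by omega) hb7
          (getB _ (by omega) hn10) (by omega) ?_
        · simpa using this
        · intro u h1 h2
          have : u = 5 * k + 9 := by omega
          subst this
          exact notB _ (by omega) ⟨k + 2, by omega, hAk2⟩
      refine ⟨?_, ?_, ?_, ?_⟩
      · have e : 4 * (k + 1) + 1 = 4 * k + 5 := by ring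
        rw [e, hb5]; ring
      · have e : 4 * (k + 1) + 2 = 4 * k + 6 := by ring
        rw [e, hb6]; ring
      · have e : 4 * (k + 1) + 3 = 4 * k + 7 := by ring
        have e2 : (k + 1) + 1 = k + 2 := by ring
        rw [e, e2, hb7, hAk2]; ring
      · have e : 4 * (k + 1) + 4 = 4 * k + 8 := by ring
        rw [e, hb8]; ring

/-- Main invariant: `A j ∈ {5j-2, 5j-1}`, with `A j = 5j-2` when `j` is odd. -/
private lemma af_mainQ {A B : ℕ → ℕ}
    (hA : StrictMonoOn A (Set.Ici 1)) (hB : StrictMonoOn B (Set.Ici 1))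
    (hB1 : ∀ n, 1 ≤ n → 1 ≤ B n)
    (hcomp : ∀ m, 1 ≤ m →
      ((∃ n, 1 ≤ n ∧ A n = m) ∧ ¬(∃ n, 1 ≤ n ∧ B n = m)) ∨
      (¬(∃ n, 1 ≤ n ∧ A n = m) ∧ (∃ n, 1 ≤ n ∧ B n = m)))
    (hAval : ∀ m, A (m + 1) = B (2 * m + 1) + B (2 * m + 2)) :
    ∀ j, 1 ≤ j → 5 * j = A j + 2 ∨ (5 * j = A j + 1 ∧ j % 2 = 0) := by
  have hBge := af_Bge hB hB1
  have hAlow : ∀ m, 4 * m + 3 ≤ A (m + 1) := by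
    intro m
    have h1 := hAval m
    have h2 := hBge (2 * m + 1) (by omega)
    have h3 := hBge (2 * m + 2) (by omega)
    omega
  intro j
  induction j using Nat.strong_induction_on with
  | _ j IH =>
    intro hj
    have hQ : ∀ j', 1 ≤ j' → j' ≤ j - 1 →
        5 * j' = A j' + 2 ∨ (5 * j' = A j' + 1 ∧ j' % 2 = 0) := by
      intro j' h1 h2
      exact IH j' (by omega) h1
    by_cases hpar : j % 2 = 1
    · -- odd : j = 2k+1
      obtain ⟨k, rfl⟩ : ∃ k, j = 2 * k + 1 := ⟨j / 2, by omega⟩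
      have hAv : A (2 * k + 1) = B (4 * k + 1) + B (4 * k + 2) := by
        have := hAval (2 * k)
        have e1 : 2 * (2 * k) + 1 = 4 * k + 1 := by ring
        have e2 : 2 * (2 * k) + 2 = 4 * k + 2 := by ring
        rw [e1, e2] at this
        exact this
      by_cases hk : k = 0
      · subst hk
        -- A 1 = B 1 + B 2, show B 1 = 1, B 2 = 2
        have hn1 : ¬ ∃ n, 1 ≤ n ∧ A n = 1 := by
          rintro ⟨i, hi, hAi⟩
          obtain ⟨m, rfl⟩ : ∃ m, i = m + 1 := ⟨i - 1, by omega⟩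
          have := hAlow m
          omega
        have hn2 : ¬ ∃ n, 1 ≤ n ∧ A n = 2 := by
          rintro ⟨i, hi, hAi⟩
          obtain ⟨m, rfl⟩ : ∃ m, i = m + 1 := ⟨i - 1, by omega⟩
          have := hAlow m
          omega
        have getB : ∀ m, 1 ≤ m → (¬ ∃ n, 1 ≤ n ∧ A n = m) → ∃ n, 1 ≤ n ∧ B n = m := by
          intro m hm h
          rcases hcomp m hm with ⟨h1, _⟩ | ⟨_, h2⟩
          · exact absurd h1 h
          · exact h2
        have hB1v : B 1 = 1 := by
          obtain ⟨i, hi, hBi⟩ := getB 1 (by omega) hn1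
          have := hBge i hi
          have : i = 1 := by omega
          subst this; exact hBi
        have hB2v : B 2 = 2 := by
          apply af_nextB hB (by omega) hB1v (getB 2 (by omega) hn2) (by omega)
          intro u h1 h2; omega
        simp only [Nat.mul_zero, Nat.zero_add] at hAv ⊢
        left
        rw [hAv]
        omega
      · -- k ≥ 1
        have hBF := af_BF hA hB hB1 hcomp hAval
          (J := 2 * k) (by intro j' h1 h2; exact hQ j' h1 (by omega)) k (by omega)
        left
        omega
    · -- even : j = 2k+2
      obtain ⟨k, rfl⟩ : ∃ k, j = 2 * k + 2 := ⟨(j - 2) / 2, by omega⟩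
      have hAv : A (2 * k + 2) = B (4 * k + 3) + B (4 * k + 4) := by
        have := hAval (2 * k + 1)
        have e1 : 2 * (2 * k + 1) + 1 = 4 * k + 3 := by ring
        have e2 : 2 * (2 * k + 1) + 2 = 4 * k + 4 := by ring
        rw [e1, e2] at this
        exact this
      have hBF := af_BF hA hB hB1 hcomp hAval
        (J := 2 * k + 1) (by intro j' h1 h2; exact hQ j' h1 (by omega)) k (by omega)
      have hQk1 : 5 * (k + 1) = A (k + 1) + 2 ∨ (5 * (k + 1) = A (k + 1) + 1 ∧ (k + 1) % 2 = 0) := by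
        rcases Nat.eq_or_lt_of_le (show 1 ≤ k + 1 by omega) with h | h
        · exact hQ (k + 1) (by omega) (by omega)
        · exact hQ (k + 1) (by omega) (by omega)
      obtain ⟨_, _, h3, h4⟩ := hBF
      omega

/-- Each anti-Fibonacci difference A_{n+1} - A_n is 4, 5 or 6, and the difference word,
grouped in pairs from n = 1, consists of the blocks 64 and 55. -/
theorem stmt19 (A B : ℕ → ℕ) (h : AntiRec 2 ![1, 1] A B) :
    (∀ n, 1 ≤ n → A (n + 1) - A n ∈ ({4, 5, 6} : Set ℕ)) ∧
    (∀ m : ℕ,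
      (A (2 * m + 2) - A (2 * m + 1) = 6 ∧ A (2 * m + 3) - A (2 * m + 2) = 4) ∨
      (A (2 * m + 2) - A (2 * m + 1) = 5 ∧ A (2 * m + 3) - A (2 * m + 2) = 5)) := by
  obtain ⟨⟨hA, hB, hA1, hB1, hcomp⟩, hrec⟩ := h
  have hAval : ∀ m, A (m + 1) = B (2 * m + 1) + B (2 * m + 2) := by
    intro m
    have := hrec (m + 1) (by omega)
    simp [Fin.sum_univ_two] at this
    convert this using 3 <;> ring
  have hQ := af_mainQ hA hB hB1 hcomp hAval
  constructor
  · intro n hn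
    have q1 := hQ n hn
    have q2 := hQ (n + 1) (by omega)
    simp only [Set.mem_insert_iff, Set.mem_singleton_iff]
    omega
  · intro m
    have q1 := hQ (2 * m + 1) (by omega)
    have q2 := hQ (2 * m + 2) (by omega)
    have q3 := hQ (2 * m + 3) (by omega)
    omega
end
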